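/- Let f, g be nonconstant (ρ,σ)-homogeneous polynomials in K[X,Y] of integer degrees v > 0 and u > 0 respectively, with (ρ,σ) ∈ ℤ² \ {(0,0)}, satisfying f^u = λ g^v for some λ ∈ K^*. Let d = gcd(v,u), v₀ = v/d, u₀ = u/d. Then there exist h ∈ K[X,Y] and nonzero γ, β ∈ K such that f = γ h^{v₀} and g = β h^{u₀}. -/

import Mathlib

/-!
In a UFD, `f ^ u ~ g ^ v` forces `f ^ u₀ ~ g ^ v₀` after cancelling the common exponent
`d = gcd v u` (an element is determined up to units by its `d`-th power). With `u₀, v₀` coprime,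
write `u₀ x = v₀ y + 1`: then `(f ^ y) ^ v₀ ∣ (g ^ x) ^ v₀`, so `g ^ x = f ^ y * h`, and comparing
`f ^ (u₀ x) = (f ^ y) ^ v₀ * f` with `(g ^ x) ^ v₀ = (f ^ y) ^ v₀ * h ^ v₀` gives `f ~ h ^ v₀`,
whence also `g ~ h ^ u₀`. In `K[X,Y]` the units are the nonzero constants.
-/

open MvPolynomial

/-- `f` is `(ρ,σ)`-homogeneous of (integer) degree `τ` for `(ρ,σ) ∈ ℤ²`: every monomial
`X^i Y^j` occurring in `f` satisfies `ρ i + σ j = τ`. -/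
def IsZHomogeneous {K : Type*} [CommRing K] (ρ σ : ℤ) (τ : ℤ)
    (f : MvPolynomial (Fin 2) K) : Prop :=
  ∀ m ∈ f.support, ρ * (m 0 : ℤ) + σ * (m 1 : ℤ) = τ

namespace UniqueFactorizationMonoid

variable {R : Type*} [CommMonoidWithZero R] [UniqueFactorizationMonoid R]

theorem associated_of_pow_associated_pow {a b : R} {n : ℕ} (hn : n ≠ 0)
    (h : Associated (a ^ n) (b ^ n)) : Associated a b :=
  associated_of_dvd_dvd ((pow_dvd_pow_iff_dvd hn).mp h.dvd)
    ((pow_dvd_pow_iff_dvd hn).mp h.symm.dvd)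

theorem exists_associated_pow_of_pow_associated_pow_of_coprime {a b : R} {m n : ℕ}
    (hmn : Nat.Coprime m n) (ha : a ≠ 0) (h : Associated (a ^ m) (b ^ n)) :
    ∃ c : R, Associated a (c ^ n) := by
  rcases Nat.lt_or_ge 1 n with hn | hn
  · obtain ⟨x, -, hx⟩ := Nat.exists_mul_mod_eq_one_of_coprime hmn hn
    have hbezout : m * x = n * (m * x / n) + 1 := by
      rw [← hx, Nat.div_add_mod]
    set y := m * x / n
    have hpow : Associated ((a ^ y) ^ n * a) ((b ^ x) ^ n) := by
      rw [← pow_mul, ← pow_succ, mul_comm y, ← hbezout, pow_mul a, ← pow_mul b, mul_comm x n,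
        pow_mul]
      exact h.pow_pow
    obtain ⟨c, hc⟩ := (pow_dvd_pow_iff_dvd (by omega)).mp (dvd_trans (dvd_mul_right _ a) hpow.dvd)
    refine ⟨c, Associated.of_mul_left (a := (a ^ y) ^ n) ?_ (Associated.refl _)
      (pow_ne_zero _ (pow_ne_zero _ ha))⟩
    rwa [hc, mul_pow] at hpow
  · interval_cases n
    · obtain rfl : m = 1 := Nat.coprime_zero_right m |>.mp hmn
      exact ⟨b, by simpa using h⟩
    · exact ⟨a, by rw [pow_one]⟩

theorem exists_associated_pow_gcd_of_pow_associated_pow {f g : R} {u v : ℕ} (hf : f ≠ 0)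
    (hv : 0 < v) (hfg : Associated (f ^ u) (g ^ v)) :
    ∃ h : R, Associated f (h ^ (v / v.gcd u)) ∧ Associated g (h ^ (u / v.gcd u)) := by
  set d := v.gcd u
  have hd : 0 < d := Nat.gcd_pos_of_pos_left u hv
  set v₀ := v / d
  set u₀ := u / d
  have hv₀ : d * v₀ = v := Nat.mul_div_cancel' (Nat.gcd_dvd_left v u)
  have hu₀ : d * u₀ = u := Nat.mul_div_cancel' (Nat.gcd_dvd_right v u)
  have hcop : Nat.Coprime u₀ v₀ := (Nat.coprime_div_gcd_div_gcd hd).symm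
  have h₀ : Associated (f ^ u₀) (g ^ v₀) := by
    refine associated_of_pow_associated_pow hd.ne' ?_
    rwa [← pow_mul, ← pow_mul, mul_comm u₀, mul_comm v₀, hu₀, hv₀]
  obtain ⟨h, hfh⟩ := exists_associated_pow_of_pow_associated_pow_of_coprime hcop hf h₀
  have hv₀pos : 0 < v₀ := Nat.div_pos (Nat.gcd_le_left u hv) hd
  refine ⟨h, hfh, associated_of_pow_associated_pow hv₀pos.ne' ?_⟩
  rw [← pow_mul, mul_comm, pow_mul]
  exact h₀.symm.trans hfh.pow_pow

end UniqueFactorizationMonoid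

theorem MvPolynomial.exists_C_mul_eq_of_associated {σ K : Type*} [Field K]
    {p q : MvPolynomial σ K} (h : Associated p q) : ∃ c : K, c ≠ 0 ∧ q = C c * p := by
  obtain ⟨w, hw⟩ := h
  obtain ⟨c, hc, hwc⟩ := isUnit_iff_eq_C_of_isReduced.mp w.isUnit
  exact ⟨c, hc.ne_zero, by rw [← hw, hwc, mul_comm]⟩

theorem power_relation_common_root_general {K : Type*} [Field K]
    (v u : ℕ) (hv : 0 < v)
    (f g : MvPolynomial (Fin 2) K)
    (hfc : ∀ c : K, f ≠ C c)
    (lam : K) (hlam : lam ≠ 0) (hpow : f ^ u = C lam * g ^ v) :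
    ∃ (h : MvPolynomial (Fin 2) K) (γ β : K), γ ≠ 0 ∧ β ≠ 0 ∧
      f = C γ * h ^ (v / Nat.gcd v u) ∧ g = C β * h ^ (u / Nat.gcd v u) := by
  have hassoc : Associated (f ^ u) (g ^ v) := by
    rw [hpow]
    exact associated_unit_mul_left _ _ (hlam.isUnit.map C)
  obtain ⟨h, hfh, hgh⟩ := UniqueFactorizationMonoid.exists_associated_pow_gcd_of_pow_associated_pow
    (by simpa using hfc 0) hv hassoc
  obtain ⟨γ, hγ, hf⟩ := exists_C_mul_eq_of_associated hfh.symm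
  obtain ⟨β, hβ, hg⟩ := exists_C_mul_eq_of_associated hgh.symm
  exact ⟨h, γ, β, hγ, hβ, hf, hg⟩

/-- Let `f, g` be nonconstant `(ρ,σ)`-homogeneous polynomials of positive integer degrees
`v` and `u`, with `f^u = λ g^v` for some `λ ∈ K^*`. With `d = gcd(v,u)`, `v₀ = v/d`,
`u₀ = u/d`, there are `h ∈ K[X,Y]` and nonzero `γ, β ∈ K` with `f = γ h^{v₀}`, `g = β h^{u₀}`. -/
theorem power_relation_common_root {K : Type*} [Field K] [CharZero K]
    (ρ σ : ℤ) (hρσ : (ρ, σ) ≠ (0, 0)) (v u : ℕ) (hv : 0 < v) (hu : 0 < u)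
    (f g : MvPolynomial (Fin 2) K)
    (hfc : ∀ c : K, f ≠ C c) (hgc : ∀ c : K, g ≠ C c)
    (hf : IsZHomogeneous ρ σ (v : ℤ) f) (hg : IsZHomogeneous ρ σ (u : ℤ) g)
    (lam : K) (hlam : lam ≠ 0) (hpow : f ^ u = C lam * g ^ v) :
    ∃ (h : MvPolynomial (Fin 2) K) (γ β : K), γ ≠ 0 ∧ β ≠ 0 ∧
      f = C γ * h ^ (v / Nat.gcd v u) ∧ g = C β * h ^ (u / Nat.gcd v u) :=
  power_relation_common_root_general v u hv f g hfc lam hlam hpow
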